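/- Let r > 0, R ∈ ℕ, and suppose for all (Z,X) in a given set B and all k ∈ {0,…,R} the quantities satisfy e^{-R/4} < |X₀+X| < 2e^{-R/4} and (5/8)e^{-R/2} < |W| < 3e^{-R/2}, where W = Z₀+Z+(1/2)[X₀,X]. Define h(k) = r·e^{-k}/((e^{-k} + (1/4)|X₀+X|²)² + |W|²). Then for all k ∈ {0,…,R}: h(k) > r/13, and h(k) ≤ r/(e^{-k} + (1/2)e^{-R/2} + (25/64)e^{k-R}). -/

import Mathlib

/-!
Write `E = e^{-k}` and `S = e^{-R/2}`, so that `S² ≤ E ≤ 1` for `k ≤ R`, while the hypotheses give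
`S < a² < 4S` and `(25/64) S² < b² < 9 S²`. The denominator `D = (E + a²/4)² + b²` is then squeezed
between `E² + ES/2 + (25/64) S²` and `(E + S)² + 9S² ≤ 2E² + 2S² + 9S² ≤ 13E`, and both bounds on
`h = rE/D` follow by cross-multiplication, using `S² = E · e^{k-R}` for the lower bound on `D`.
-/

open Real

section Denominator

variable {E S a b : ℝ}

theorem add_sq_add_sq_lt_thirteen_mul (hE1 : E ≤ 1) (hSE : S ^ 2 ≤ E) (ha : a ^ 2 < 4 * S)
    (hb : b ^ 2 < 9 * S ^ 2) : (E + 1 / 4 * a ^ 2) ^ 2 + b ^ 2 < 13 * E := by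
  have hE : 0 ≤ E := (sq_nonneg S).trans hSE
  have hsum : (E + 1 / 4 * a ^ 2) ^ 2 < (E + S) ^ 2 :=
    pow_lt_pow_left₀ (by linarith) (by positivity) two_ne_zero
  nlinarith [sq_nonneg (E - S)]

theorem mul_lt_add_sq_add_sq {X : ℝ} (hE : 0 ≤ E) (ha : S < a ^ 2) (hb : 25 / 64 * S ^ 2 < b ^ 2)
    (hX : E * X = S ^ 2) :
    E * (E + 1 / 2 * S + 25 / 64 * X) < (E + 1 / 4 * a ^ 2) ^ 2 + b ^ 2 := by
  nlinarith [mul_le_mul_of_nonneg_left ha.le hE, sq_nonneg (a ^ 2)]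

end Denominator

section Quotient

variable {r c E D M : ℝ}

theorem div_lt_mul_div_of_lt_mul (hr : 0 < r) (hc : 0 < c) (hD : 0 < D) (h : D < c * E) :
    r / c < r * E / D := by
  rw [div_lt_div_iff₀ hc hD]
  nlinarith

theorem mul_div_le_div_of_mul_le (hr : 0 ≤ r) (hD : 0 < D) (hM : 0 < M) (h : E * M ≤ D) :
    r * E / D ≤ r / M := by
  rw [div_le_div_iff₀ hD hM]
  nlinarith

end Quotient

theorem exp_neg_div_four_sq (x : ℝ) : exp (-x / 4) ^ 2 = exp (-x / 2) := by
  rw [← exp_nat_mul]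
  ring_nf

theorem exp_neg_div_two_sq_le_exp_neg {x y : ℝ} (h : x ≤ y) : exp (-y / 2) ^ 2 ≤ exp (-x) := by
  rw [← exp_nat_mul, exp_le_exp]
  linarith

theorem exp_neg_mul_exp_sub (x y : ℝ) : exp (-x) * exp (x - y) = exp (-y / 2) ^ 2 := by
  rw [← exp_add, ← exp_nat_mul]
  ring_nf

theorem stmt_3 (r : ℝ) (hr : 0 < r) (R : ℕ) (a b : ℝ)
    (ha1 : Real.exp (-(R : ℝ) / 4) < a) (ha2 : a < 2 * Real.exp (-(R : ℝ) / 4))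
    (hb1 : (5 / 8) * Real.exp (-(R : ℝ) / 2) < b) (hb2 : b < 3 * Real.exp (-(R : ℝ) / 2))
    (k : ℕ) (hk : k ≤ R) :
    r * Real.exp (-(k : ℝ)) /
        ((Real.exp (-(k : ℝ)) + (1 / 4) * a ^ 2) ^ 2 + b ^ 2) > r / 13 ∧
    r * Real.exp (-(k : ℝ)) /
        ((Real.exp (-(k : ℝ)) + (1 / 4) * a ^ 2) ^ 2 + b ^ 2) ≤
      r / (Real.exp (-(k : ℝ)) + (1 / 2) * Real.exp (-(R : ℝ) / 2) +
        (25 / 64) * Real.exp ((k : ℝ) - (R : ℝ))) := by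
  have hq := exp_neg_div_four_sq (R : ℝ)
  have hq0 := exp_pos (-(R : ℝ) / 4)
  set S := exp (-(R : ℝ) / 2)
  have hS : 0 < S := exp_pos _
  have haS : S < a ^ 2 := by nlinarith
  have haS' : a ^ 2 < 4 * S := by nlinarith
  have hbS : 25 / 64 * S ^ 2 < b ^ 2 := by nlinarith
  have hbS' : b ^ 2 < 9 * S ^ 2 := by nlinarith
  have hE1 : exp (-(k : ℝ)) ≤ 1 := exp_le_one_iff.2 (by simp)
  have hSE : S ^ 2 ≤ exp (-(k : ℝ)) := exp_neg_div_two_sq_le_exp_neg (by exact_mod_cast hk)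
  have hD : 0 < (exp (-(k : ℝ)) + 1 / 4 * a ^ 2) ^ 2 + b ^ 2 := by positivity
  exact ⟨div_lt_mul_div_of_lt_mul hr (by norm_num) hD
      (add_sq_add_sq_lt_thirteen_mul hE1 hSE haS' hbS'),
    mul_div_le_div_of_mul_le hr.le hD (by positivity)
      (mul_lt_add_sq_add_sq (exp_pos _).le haS hbS (exp_neg_mul_exp_sub _ _)).le⟩
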